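/- Let P, Q ∈ L^(l)∖{0} and (ρ,σ) ∈ 𝔙. If [ℓ_{ρ,σ}(P), ℓ_{ρ,σ}(Q)] = 0, then st_{ρ,σ}(P) ∼ st_{ρ,σ}(Q) and en_{ρ,σ}(P) ∼ en_{ρ,σ}(Q). -/

import Mathlib

/-!
Formalization framework for "On the shape of possible counterexamples to the Jacobian
Conjecture" by Guccione–Guccione–Valqui.

The algebra `L^(l) = K[x^{1/l}, x^{-1/l}, y]` is modelled as the monoid algebra of the
additive monoid `ℤ × ℕ` over `K`, where the exponent pair `(i, j)` encodes the monomial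
`x^(i/l) * y^j`.
-/

open scoped Classical

set_option linter.unusedSectionVars false

noncomputable section

namespace JC

variable (K : Type*) [Field K] [CharZero K]

/-- `L^(l)`, modelled as the monoid algebra on `ℤ × ℕ`. -/
abbrev Ll := AddMonoidAlgebra K (ℤ × ℕ)

variable {K}

/-- The variable `x = (x^{1/l})^l` of `L = K[x,y] ⊆ L^(l)`. -/
def xVar (l : ℕ) : Ll K := AddMonoidAlgebra.ofCoeff (Finsupp.single ((l : ℤ), (0 : ℕ)) (1 : K))

/-- The variable `y`. -/
def yVar : Ll K := AddMonoidAlgebra.ofCoeff (Finsupp.single ((0 : ℤ), (1 : ℕ)) (1 : K))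

/-- The partial derivative `∂ₓ` on `L^(l)`:  `x^(i/l) y^j ↦ (i/l) x^(i/l - 1) y^j`. -/
def dX (l : ℕ) (P : Ll K) : Ll K :=
  Finsupp.sum P.coeff fun p c =>
    AddMonoidAlgebra.ofCoeff (Finsupp.single (p.1 - (l : ℤ), p.2) (c * ((p.1 : K) / (l : K))))

/-- The partial derivative `∂ᵧ` on `L^(l)`. -/
def dY (P : Ll K) : Ll K :=
  Finsupp.sum P.coeff fun p c => AddMonoidAlgebra.ofCoeff (Finsupp.single (p.1, p.2 - 1) (c * (p.2 : K)))

/-- The Jacobian `[P,Q] = ∂ₓP ∂ᵧQ − ∂ᵧP ∂ₓQ`. -/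
def br (l : ℕ) (P Q : Ll K) : Ll K := dX l P * dY Q - dY P * dX l Q

/-- `[P,Q] ∈ K^×`, i.e. the Jacobian is a nonzero constant. -/
def JacConst (l : ℕ) (P Q : Ll K) : Prop :=
  ∃ c : K, c ≠ 0 ∧ br l P Q = algebraMap K (Ll K) c

/-- Membership in `L = K[x,y] ⊆ L^(l)`: all exponents `i/l` are nonnegative integers. -/
def InL (l : ℕ) (P : Ll K) : Prop := ∀ p ∈ P.coeff.support, 0 ≤ p.1 ∧ (l : ℤ) ∣ p.1

/-- The point `(i/l, j)` of `ℚ²` attached to an exponent pair `(i,j)`. -/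
def pt (l : ℕ) (p : ℤ × ℕ) : ℚ × ℚ := ((p.1 : ℚ) / (l : ℚ), (p.2 : ℚ))

/-- The `(ρ,σ)`-degree `ρ·(i/l) + σ·j` of an exponent pair. -/
def dg (l : ℕ) (ρ σ : ℤ) (p : ℤ × ℕ) : ℚ :=
  (ρ : ℚ) * ((p.1 : ℚ) / (l : ℚ)) + (σ : ℚ) * (p.2 : ℚ)

/-- `v_{ρ,σ}(P) ∈ WithBot ℚ`, with the convention `v_{ρ,σ}(0) = ⊥ = −∞`. -/
def v (l : ℕ) (ρ σ : ℤ) (P : Ll K) : WithBot ℚ :=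
  P.coeff.support.sup fun p => ((dg l ρ σ p : ℚ) : WithBot ℚ)

/-- `ℚ`-valued `(ρ,σ)`-degree (with junk value `0` at `P = 0`). -/
def vq (l : ℕ) (ρ σ : ℤ) (P : Ll K) : ℚ := (v l ρ σ P).unbotD 0

/-- The `(ρ,σ)`-leading form `ℓ_{ρ,σ}(P)`. -/
def lead (l : ℕ) (ρ σ : ℤ) (P : Ll K) : Ll K :=
  AddMonoidAlgebra.ofCoeff (Finsupp.filter (fun p => ((dg l ρ σ p : ℚ) : WithBot ℚ) = v l ρ σ P) P.coeff)

/-- `(ρ,σ)`-homogeneity. -/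
def IsHomog (l : ℕ) (ρ σ : ℤ) (P : Ll K) : Prop := P = lead l ρ σ P

/-- Directions: coprime pairs of integers. -/
def IsDirV (d : ℤ × ℤ) : Prop := Int.gcd d.1 d.2 = 1

/-- `Dir(P)`: the set of directions in which the leading form is not a monomial. -/
def DirSet (l : ℕ) (P : Ll K) : Set (ℤ × ℤ) :=
  {d | IsDirV d ∧ 1 < (lead l d.1 d.2 P).coeff.support.card}

/-- Cross product of two vectors of `ℚ²`. -/
def cross (A B : ℚ × ℚ) : ℚ := A.1 * B.2 - A.2 * B.1

/-- Dot product of two vectors of `ℚ²`. -/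
def dot (A B : ℚ × ℚ) : ℚ := A.1 * B.1 + A.2 * B.2

/-- Alignment `A ∼ B`. -/
def Aligned (A B : ℚ × ℚ) : Prop := cross A B = 0

/-- A pair of integers viewed in `ℚ²`. -/
def dq (d : ℤ × ℤ) : ℚ × ℚ := ((d.1 : ℚ), (d.2 : ℚ))

/-- Evaluation `v_{ρ,σ}` at a point of `ℚ²`. -/
def vpt (ρ σ : ℤ) (A : ℚ × ℚ) : ℚ := (ρ : ℚ) * A.1 + (σ : ℚ) * A.2

/-- `st_{ρ,σ}(P)`: the endpoint of the segment `Supp(ℓ_{ρ,σ}(P))` at which the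
functional `(ρ,σ) × ·` is minimal (so that `(ρ,σ) × (en − st) ≥ 0`). -/
def stPt (l : ℕ) (ρ σ : ℤ) (P : Ll K) : ℚ × ℚ :=
  if h : (lead l ρ σ P).coeff.support.Nonempty then
    pt l <| Classical.choose <|
      (lead l ρ σ P).coeff.support.exists_min_image (fun p => cross (dq (ρ, σ)) (pt l p)) h
  else (0, 0)

/-- `en_{ρ,σ}(P)`: the other endpoint of the segment `Supp(ℓ_{ρ,σ}(P))`. -/
def enPt (l : ℕ) (ρ σ : ℤ) (P : Ll K) : ℚ × ℚ :=
  if h : (lead l ρ σ P).coeff.support.Nonempty then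
    pt l <| Classical.choose <|
      (lead l ρ σ P).coeff.support.exists_max_image (fun p => cross (dq (ρ, σ)) (pt l p)) h
  else (0, 0)

/-- The index (`0`–`3`) of a direction `a` in the counterclockwise sweep of the circle of
directions starting just after the base direction `u`. -/
def idx (u a : ℤ × ℤ) : ℕ :=
  if 0 < cross (dq u) (dq a) then 0
  else if cross (dq u) (dq a) = 0 ∧ dot (dq u) (dq a) < 0 then 1
  else if cross (dq u) (dq a) < 0 then 2
  else 3

/-- The strict counterclockwise order on directions with base point `u`:  `a` is
encountered strictly before `b` when running counterclockwise starting just after `u`. -/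
def ccwLt (u a b : ℤ × ℤ) : Prop :=
  idx u a < idx u b ∨ (idx u a = idx u b ∧ 0 < cross (dq a) (dq b))

/-- Reflexive closure of `ccwLt`. -/
def ccwLe (u a b : ℤ × ℤ) : Prop := a = b ∨ ccwLt u a b

/-- `w = Succ_P(u)`: the first element of `Dir(P)` encountered starting from `u` and
running counterclockwise. -/
def IsSucc (l : ℕ) (P : Ll K) (u w : ℤ × ℤ) : Prop :=
  w ∈ DirSet l P ∧ w ≠ u ∧ ∀ w' ∈ DirSet l P, w' ≠ u → ccwLe u w w'

/-- `(m,n)`-pairs in `L^(l)`. -/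
structure IsMNPair (l m n : ℕ) (P Q : Ll K) : Prop where
  coprime : Nat.Coprime m n
  one_lt_m : 1 < m
  one_lt_n : 1 < n
  jac : JacConst l P Q
  ratio11 : vq l 1 1 P / vq l 1 1 Q = (m : ℚ) / (n : ℚ)
  ratio10 : vq l 1 0 P / vq l 1 0 Q = (m : ℚ) / (n : ℚ)
  en10 : vpt 1 (-1) (enPt l 1 0 P) < 0

/-- Standard `(m,n)`-pairs (in `L^(1)`). -/
def IsStandard (m n : ℕ) (P Q : Ll K) : Prop :=
  IsMNPair 1 m n P Q ∧ vpt 1 (-1) (stPt 1 1 0 P) < 0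

/-- Membership in the interval of directions `I = ](1,−1),(1,0)]`. -/
def InI (d : ℤ × ℤ) : Prop := IsDirV d ∧ 0 < d.1 + d.2 ∧ d.2 ≤ 0

/-- Regular corners of an `(m,n)`-pair. -/
def IsRegCorner (l m : ℕ) (P : Ll K) (A : ℚ × ℚ) (d : ℤ × ℤ) : Prop :=
  (∃ a : ℤ, ∃ b : ℕ, A = ((a : ℚ) / (l : ℚ), (b : ℚ)) ∧ 1 ≤ b ∧ (a : ℚ) / (l : ℚ) < (b : ℚ)) ∧
  InI d ∧ d ∈ DirSet l P ∧ enPt l d.1 d.2 P = ((m : ℚ) * A.1, (m : ℚ) * A.2)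

/-- The set `A(P)`. -/
def ASet (l : ℕ) (P : Ll K) : Set (ℤ × ℤ) :=
  {d | d ∈ DirSet l P ∧ InI d ∧
    vpt 0 (-1) (stPt l d.1 d.2 P) < -1 ∧ vpt 1 (-1) (stPt l d.1 d.2 P) < 0}

/-- The univariate polynomial `𝔭` with `ℓ_{ρ,σ}(P) = x^(k/l) 𝔭(z)`, `z := x^(−σ/ρ) y`
(for a `(ρ,σ)`-homogeneous element with `ρ > 0`, the `z`-degree equals the `y`-degree). -/
def toPoly (R : Ll K) : Polynomial K :=
  Finsupp.sum R.coeff fun p c => Polynomial.C c * Polynomial.X ^ p.2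

/-- The minimal `y`-exponent occurring in `R`. -/
def ymin (R : Ll K) : ℕ := sInf (Prod.snd '' (R.coeff.support : Set (ℤ × ℕ)))

/-- The univariate polynomial `p` with `ℓ_{ρ,σ}(P) = x^(r/l) y^s p(z)` and `p(0) ≠ 0`. -/
def toPolyL (R : Ll K) : Polynomial K :=
  Finsupp.sum R.coeff fun p c => Polynomial.C c * Polynomial.X ^ (p.2 - ymin R)

/-- A regular corner in direction `d` is of type II. -/
def TypeII (l : ℕ) (P Q : Ll K) (d : ℤ × ℤ) : Prop :=
  br l (lead l d.1 d.2 P) (lead l d.1 d.2 Q) = 0 ∧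
    1 < (toPoly (lead l d.1 d.2 P)).roots.toFinset.card

variable (K)

/-- The polynomial subalgebra `K[x,y] ⊆ L^(1)`. -/
def polyAlg : Subalgebra K (Ll K) := Algebra.adjoin K {xVar 1, yVar}

/-- `(P,Q)` is a counterexample to the Jacobian Conjecture: `P, Q ∈ K[x,y]`, the Jacobian
`[P,Q]` is a nonzero constant, and `K[P,Q] ≠ K[x,y]`. -/
def IsCtrex (P Q : Ll K) : Prop :=
  P ∈ polyAlg K ∧ Q ∈ polyAlg K ∧ JacConst 1 P Q ∧ Algebra.adjoin K {P, Q} ≠ polyAlg K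

/-- The set of numbers `gcd(v_{1,1}(P), v_{1,1}(Q))` over all counterexamples `(P,Q)`. -/
def BSet : Set ℕ :=
  {d | ∃ P Q : Ll K, ∃ dP dQ : ℕ, IsCtrex K P Q ∧
    (dP : ℚ) = vq 1 1 1 P ∧ (dQ : ℚ) = vq 1 1 1 Q ∧ d = Nat.gcd dP dQ}

/-- The number `B`: the minimum of `gcd(v_{1,1}(P), v_{1,1}(Q))` over all counterexamples. -/
def Bnum : ℕ := sInf (BSet K)

variable {K}

/-!
Write `X^p` for the monomial with exponent `p`, read as the point `(i/l, j)`. Multiplied by `x y`,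
the Jacobian of two monomials becomes `[a X^p, b X^q] · x y = a b (p × q) X^(p+q)`. The support of
`ℓ_{ρ,σ}(P)` lies on a line of constant `(ρ,σ)`-degree, on which `p ↦ (ρ,σ) × p` is injective, and
`st` (resp. `en`) is where it is minimal (resp. maximal). Hence for the `st` (resp. `en`) exponents
`z`, `w` of `ℓ(P)`, `ℓ(Q)`, the pair `(z, w)` is the only one from the two supports with sum `z + w`,
so the coefficient of `X^(z+w)` in `x y [ℓ(P), ℓ(Q)] = 0` is `ℓ(P)_z ℓ(Q)_w (z × w)`, and
`z × w = 0`.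
-/

open AddMonoidAlgebra

lemma dX_single (l : ℕ) (p : ℤ × ℕ) (c : K) :
    dX l (single p c) = single (p.1 - l, p.2) (c * ((p.1 : K) / l)) := by
  rw [dX, coeff_single, Finsupp.sum_single_index]
  · rfl
  · simp

lemma dY_single (p : ℤ × ℕ) (c : K) :
    dY (single p c) = single (p.1, p.2 - 1) (c * p.2) := by
  rw [dY, coeff_single, Finsupp.sum_single_index]
  · rfl
  · simp

lemma br_eq_sum (l : ℕ) (R S : Ll K) :
    br l R S = ∑ p ∈ R.coeff.support, ∑ q ∈ S.coeff.support,
      br l (single p (R.coeff p)) (single q (S.coeff q)) := by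
  have hX (P : Ll K) : dX l P = ∑ p ∈ P.coeff.support, dX l (single p (P.coeff p)) := by
    simp only [dX_single]; rfl
  have hY (P : Ll K) : dY P = ∑ p ∈ P.coeff.support, dY (single p (P.coeff p)) := by
    simp only [dY_single]; rfl
  rw [br, hX R, hX S, hY R, hY S]
  simp only [br, Finset.mul_sum, Finset.sum_mul, ← Finset.sum_sub_distrib]
  exact Finset.sum_comm

-- The factor `x y` undoes the truncated subtraction `j - 1` in the `y`-exponents of `dY`.
lemma single_mul_br_single_single (l : ℕ) (p q : ℤ × ℕ) (a b : K) :
    single ((l : ℤ), 1) 1 * br l (single p a) (single q b) =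
      single (p + q) (a * b * (cross (pt l p) (pt l q) : K)) := by
  obtain ⟨p1, p2⟩ := p
  obtain ⟨q1, q2⟩ := q
  cases p2 <;> cases q2 <;>
    simp only [br, dX_single, dY_single, mul_sub, single_mul_single, Prod.mk_add_mk, cross, pt,
      add_tsub_cancel_right, zero_tsub, Nat.cast_add, Nat.cast_one, CharP.cast_eq_zero, mul_zero,
      zero_mul, one_mul, add_zero, zero_add, single_zero, sub_self, sub_zero, zero_sub, mul_neg,
      single_neg, single_sub, neg_inj, Rat.cast_zero, Rat.cast_neg, Rat.cast_sub, Rat.cast_mul,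
      Rat.cast_div, Rat.cast_add, Rat.cast_one, Rat.cast_intCast, Rat.cast_natCast] <;>
    ring_nf

lemma single_mul_br (l : ℕ) (R S : Ll K) :
    single ((l : ℤ), 1) 1 * br l R S = ∑ p ∈ R.coeff.support, ∑ q ∈ S.coeff.support,
      single (p + q) (R.coeff p * S.coeff q * (cross (pt l p) (pt l q) : K)) := by
  simp only [br_eq_sum l R S, Finset.mul_sum, single_mul_br_single_single]

lemma cross_pt_eq_zero_of_br_eq_zero {l : ℕ} {R S : Ll K} (h : br l R S = 0)
    {z w : ℤ × ℕ} (hz : z ∈ R.coeff.support) (hw : w ∈ S.coeff.support)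
    (huniq : ∀ p ∈ R.coeff.support, ∀ q ∈ S.coeff.support, p + q = z + w → p = z ∧ q = w) :
    cross (pt l z) (pt l w) = 0 := by
  have hcoeff := congrArg (fun F => (single ((l : ℤ), 1) (1 : K) * F).coeff (z + w)) h
  simp only [mul_zero, coeff_zero, Finsupp.zero_apply, single_mul_br, coeff_sum,
    Finsupp.finsetSum_apply, coeff_single, Finsupp.single_apply, ← Finset.sum_product'] at hcoeff
  rw [Finset.sum_eq_single_of_mem (z, w) (Finset.mem_product.mpr ⟨hz, hw⟩), if_pos rfl] at hcoeff
  · have hprod : R.coeff z * S.coeff w * (cross (pt l z) (pt l w) : K) = 0 := hcoeff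
    have hne : R.coeff z * S.coeff w ≠ 0 :=
      mul_ne_zero (Finsupp.mem_support_iff.mp hz) (Finsupp.mem_support_iff.mp hw)
    exact_mod_cast (mul_eq_zero.mp hprod).resolve_left hne
  · rintro ⟨p, q⟩ hpq hne
    rw [Finset.mem_product] at hpq
    exact if_neg fun hsum => hne (Prod.ext_iff.mpr (huniq p hpq.1 q hpq.2 hsum))

lemma eq_and_eq_of_add_eq_of_isMinOn {M N : Type*} [Add M] [Add N] [PartialOrder N]
    [AddLeftStrictMono N] [AddRightStrictMono N] {f : M → N} (hf : ∀ a b, f (a + b) = f a + f b)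
    {s t : Set M} (hs : s.InjOn f) (ht : t.InjOn f) {z w p q : M} (hz : z ∈ s) (hw : w ∈ t)
    (hzmin : IsMinOn f s z) (hwmin : IsMinOn f t w) (hp : p ∈ s) (hq : q ∈ t)
    (h : p + q = z + w) : p = z ∧ q = w := by
  have hsum : f z + f w = f p + f q := by rw [← hf, ← hf, h]
  obtain ⟨hfp, hfq⟩ :=
    (add_eq_add_iff_eq_and_eq (isMinOn_iff.mp hzmin p hp) (isMinOn_iff.mp hwmin q hq)).mp hsum
  exact ⟨hs hp hz hfp.symm, ht hq hw hfq.symm⟩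

lemma cross_pt_eq_zero_of_isMinOn {N : Type*} [Add N] [PartialOrder N] [AddLeftStrictMono N]
    [AddRightStrictMono N] {l : ℕ} {R S : Ll K} (h : br l R S = 0) {f : ℤ × ℕ → N}
    (hf : ∀ a b, f (a + b) = f a + f b) (hR : Set.InjOn f R.coeff.support)
    (hS : Set.InjOn f S.coeff.support) {z w : ℤ × ℕ} (hz : z ∈ R.coeff.support)
    (hw : w ∈ S.coeff.support) (hzmin : IsMinOn f R.coeff.support z)
    (hwmin : IsMinOn f S.coeff.support w) : cross (pt l z) (pt l w) = 0 :=
  cross_pt_eq_zero_of_br_eq_zero h hz hw fun _ hp _ hq hpq =>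
    eq_and_eq_of_add_eq_of_isMinOn hf hR hS hz hw hzmin hwmin hp hq hpq

lemma cross_dq_pt_add (u : ℤ × ℤ) (l : ℕ) (p q : ℤ × ℕ) :
    cross (dq u) (pt l (p + q)) = cross (dq u) (pt l p) + cross (dq u) (pt l q) := by
  simp only [cross, dq, pt, Prod.fst_add, Prod.snd_add]
  push_cast
  ring

lemma eq_of_vpt_eq_of_cross_eq {ρ σ : ℤ} (hρσ : (ρ, σ) ≠ 0) {A B : ℚ × ℚ}
    (hv : vpt ρ σ A = vpt ρ σ B) (hc : cross (dq (ρ, σ)) A = cross (dq (ρ, σ)) B) : A = B := by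
  have hn : (ρ : ℚ) * ρ + σ * σ ≠ 0 := by
    rw [Ne, mul_self_add_mul_self_eq_zero, Int.cast_eq_zero, Int.cast_eq_zero]
    exact fun h => hρσ (Prod.ext h.1 h.2)
  simp only [vpt, cross, dq] at hv hc
  refine Prod.ext (mul_left_cancel₀ hn ?_) (mul_left_cancel₀ hn ?_)
  · linear_combination (ρ : ℚ) * hv - σ * hc
  · linear_combination (σ : ℚ) * hv + ρ * hc

lemma pt_injective {l : ℕ} (hl : l ≠ 0) : Function.Injective (pt l) := by
  rintro ⟨a, b⟩ ⟨c, d⟩ h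
  have hl' : (l : ℚ) ≠ 0 := Nat.cast_ne_zero.mpr hl
  simp only [pt, Prod.mk.injEq, div_left_inj' hl', Int.cast_inj, Nat.cast_inj] at h
  rw [h.1, h.2]

lemma dg_eq_v_of_mem_lead_support {l : ℕ} {ρ σ : ℤ} {P : Ll K} {p : ℤ × ℕ}
    (hp : p ∈ (lead l ρ σ P).coeff.support) : (dg l ρ σ p : WithBot ℚ) = v l ρ σ P := by
  simp only [lead, Finsupp.support_filter, Finset.mem_filter] at hp
  exact hp.2

lemma injOn_cross_lead_support {l : ℕ} (hl : l ≠ 0) {ρ σ : ℤ} (hρσ : (ρ, σ) ≠ 0) (P : Ll K) :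
    Set.InjOn (fun p => cross (dq (ρ, σ)) (pt l p)) (lead l ρ σ P).coeff.support :=
  fun _ hp _ hq h => pt_injective hl <| eq_of_vpt_eq_of_cross_eq hρσ
    (WithBot.coe_inj.mp ((dg_eq_v_of_mem_lead_support hp).trans
      (dg_eq_v_of_mem_lead_support hq).symm)) h

lemma ne_zero_of_isDirV {d : ℤ × ℤ} (hd : IsDirV d) : d ≠ 0 := by
  rintro rfl
  simp [IsDirV] at hd

lemma lead_support_nonempty (l : ℕ) (ρ σ : ℤ) {P : Ll K} (hP : P ≠ 0) :
    (lead l ρ σ P).coeff.support.Nonempty := by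
  obtain ⟨p, hp, hsup⟩ := Finset.exists_mem_eq_sup P.coeff.support
    (Finsupp.support_nonempty_iff.mpr (mt coeff_eq_zero.mp hP))
    (fun p => ((dg l ρ σ p : ℚ) : WithBot ℚ))
  refine ⟨p, ?_⟩
  simp only [lead, Finsupp.support_filter, Finset.mem_filter]
  exact ⟨hp, hsup.symm⟩

lemma exists_stPt_eq (l : ℕ) (ρ σ : ℤ) {P : Ll K} (hP : P ≠ 0) :
    ∃ z ∈ (lead l ρ σ P).coeff.support,
      IsMinOn (fun p => cross (dq (ρ, σ)) (pt l p)) (lead l ρ σ P).coeff.support z ∧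
      stPt l ρ σ P = pt l z := by
  have hne := lead_support_nonempty l ρ σ hP
  obtain ⟨hz, hmin⟩ := Classical.choose_spec
    ((lead l ρ σ P).coeff.support.exists_min_image (fun p => cross (dq (ρ, σ)) (pt l p)) hne)
  exact ⟨_, hz, isMinOn_iff.mpr hmin, by rw [stPt, dif_pos hne]⟩

lemma exists_enPt_eq (l : ℕ) (ρ σ : ℤ) {P : Ll K} (hP : P ≠ 0) :
    ∃ z ∈ (lead l ρ σ P).coeff.support,
      IsMaxOn (fun p => cross (dq (ρ, σ)) (pt l p)) (lead l ρ σ P).coeff.support z ∧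
      enPt l ρ σ P = pt l z := by
  have hne := lead_support_nonempty l ρ σ hP
  obtain ⟨hz, hmax⟩ := Classical.choose_spec
    ((lead l ρ σ P).coeff.support.exists_max_image (fun p => cross (dq (ρ, σ)) (pt l p)) hne)
  exact ⟨_, hz, isMaxOn_iff.mpr hmax, by rw [enPt, dif_pos hne]⟩

/-- Proposition 2.3.  If `[ℓ_{ρ,σ}(P), ℓ_{ρ,σ}(Q)] = 0`, then
`st_{ρ,σ}(P) ∼ st_{ρ,σ}(Q)` and `en_{ρ,σ}(P) ∼ en_{ρ,σ}(Q)`. -/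
theorem statement3 (l : ℕ) (hl : 0 < l) (ρ σ : ℤ) (hdir : IsDirV (ρ, σ))
    (P Q : Ll K) (hP : P ≠ 0) (hQ : Q ≠ 0)
    (h : br l (lead l ρ σ P) (lead l ρ σ Q) = 0) :
    Aligned (stPt l ρ σ P) (stPt l ρ σ Q) ∧ Aligned (enPt l ρ σ P) (enPt l ρ σ Q) := by
  have hρσ := ne_zero_of_isDirV hdir
  have hinjP := injOn_cross_lead_support hl.ne' hρσ P
  have hinjQ := injOn_cross_lead_support hl.ne' hρσ Q
  obtain ⟨z, hz, hzmin, hstP⟩ := exists_stPt_eq l ρ σ hP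
  obtain ⟨w, hw, hwmin, hstQ⟩ := exists_stPt_eq l ρ σ hQ
  obtain ⟨z', hz', hzmax, henP⟩ := exists_enPt_eq l ρ σ hP
  obtain ⟨w', hw', hwmax, henQ⟩ := exists_enPt_eq l ρ σ hQ
  constructor
  · rw [Aligned, hstP, hstQ]
    exact cross_pt_eq_zero_of_isMinOn h (cross_dq_pt_add (ρ, σ) l) hinjP hinjQ hz hw hzmin hwmin
  · rw [Aligned, henP, henQ]
    exact cross_pt_eq_zero_of_isMinOn (N := ℚᵒᵈ) h (cross_dq_pt_add (ρ, σ) l) hinjP hinjQ hz' hw'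
      hzmax.dual hwmax.dual

end JC
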